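/- The four simple graphs K₂, K₇, K₉, K₁₀ on vertex set {0,1,…,11} defined in the context are pairwise non-isomorphic (there is no graph isomorphism between any two distinct ones). -/
import Mathlib


open Polynomial SimpleGraph

/-- Edge list (each unordered edge listed once) of the graph `K2`. -/
def edgesK2 : List (Fin 12 × Fin 12) :=
  [(0, 1), (0, 3), (0, 4), (0, 5), (0, 6), (1, 2), (1, 4), (1, 5), (1, 7), (2, 3), (2, 5), (2, 10), (2, 11), (3, 4), (3, 8), (3, 9), (4, 5), (4, 7), (4, 8), (5, 6), (5, 11), (6, 7), (6, 9), (6, 11), (7, 8), (7, 10), (8, 9), (8, 10), (8, 11), (9, 10), (9, 11), (10, 11)]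

/-- The simple graph on vertex set `Fin 12` with the given edge set. -/
def K2 : SimpleGraph (Fin 12) :=
  SimpleGraph.fromRel (fun i j => (i, j) ∈ edgesK2)

instance : DecidableRel K2.Adj := fun a b =>
  inferInstanceAs (Decidable (a ≠ b ∧ ((a, b) ∈ edgesK2 ∨ (b, a) ∈ edgesK2)))

/-- Edge list (each unordered edge listed once) of the graph `K7`. -/
def edgesK7 : List (Fin 12 × Fin 12) :=
  [(0, 1), (0, 3), (0, 4), (0, 5), (0, 6), (1, 2), (1, 4), (1, 5), (1, 7), (2, 3), (2, 4), (2, 9), (2, 10), (3, 4), (3, 9), (3, 11), (4, 5), (4, 9), (5, 6), (5, 7), (5, 8), (6, 7), (6, 8), (6, 10), (7, 8), (7, 11), (8, 9), (8, 10), (8, 11), (9, 10), (9, 11), (10, 11)]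

/-- The simple graph on vertex set `Fin 12` with the given edge set. -/
def K7 : SimpleGraph (Fin 12) :=
  SimpleGraph.fromRel (fun i j => (i, j) ∈ edgesK7)

instance : DecidableRel K7.Adj := fun a b =>
  inferInstanceAs (Decidable (a ≠ b ∧ ((a, b) ∈ edgesK7 ∨ (b, a) ∈ edgesK7)))

/-- Edge list (each unordered edge listed once) of the graph `K9`. -/
def edgesK9 : List (Fin 12 × Fin 12) :=
  [(0, 1), (0, 3), (0, 4), (0, 5), (0, 6), (1, 2), (1, 5), (1, 7), (1, 8), (2, 3), (2, 8), (2, 10), (2, 11), (3, 4), (3, 9), (3, 11), (4, 5), (4, 7), (4, 10), (4, 11), (5, 6), (5, 7), (5, 8), (6, 7), (6, 8), (6, 9), (7, 10), (8, 9), (8, 11), (9, 10), (9, 11), (10, 11)]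

/-- The simple graph on vertex set `Fin 12` with the given edge set. -/
def K9 : SimpleGraph (Fin 12) :=
  SimpleGraph.fromRel (fun i j => (i, j) ∈ edgesK9)

instance : DecidableRel K9.Adj := fun a b =>
  inferInstanceAs (Decidable (a ≠ b ∧ ((a, b) ∈ edgesK9 ∨ (b, a) ∈ edgesK9)))

/-- Edge list (each unordered edge listed once) of the graph `K10`. -/
def edgesK10 : List (Fin 12 × Fin 12) :=
  [(0, 1), (0, 3), (0, 4), (0, 5), (0, 6), (1, 2), (1, 7), (1, 8), (1, 9), (2, 3), (2, 7), (2, 9), (2, 10), (3, 4), (3, 6), (3, 11), (4, 5), (4, 9), (4, 10), (4, 11), (5, 6), (5, 8), (5, 10), (5, 11), (6, 7), (6, 11), (7, 8), (7, 10), (8, 9), (8, 10), (8, 11), (9, 10), (9, 11)]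

/-- The simple graph on vertex set `Fin 12` with the given edge set. -/
def K10 : SimpleGraph (Fin 12) :=
  SimpleGraph.fromRel (fun i j => (i, j) ∈ edgesK10)

instance : DecidableRel K10.Adj := fun a b =>
  inferInstanceAs (Decidable (a ≠ b ∧ ((a, b) ∈ edgesK10 ∨ (b, a) ∈ edgesK10)))


set_option linter.unusedSectionVars false

section Invariants

variable {V W : Type*} [Fintype V] [Fintype W] [DecidableEq V] [DecidableEq W]

/-- number of common neighbors of `a` and `b` -/
def cn (G : SimpleGraph V) [DecidableRel G.Adj] (a b : V) : Nat :=
  (Finset.univ.filter (fun x => G.Adj a x ∧ G.Adj b x)).card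

/-- sum over ordered adjacent pairs of the square of the common-neighbor count -/
def sqSum (G : SimpleGraph V) [DecidableRel G.Adj] : Nat :=
  ∑ p ∈ Finset.univ.filter (fun p : V × V => G.Adj p.1 p.2), (cn G p.1 p.2) ^ 2

/-- number of ordered adjacent pairs -/
def adjCount (G : SimpleGraph V) [DecidableRel G.Adj] : Nat :=
  (Finset.univ.filter (fun p : V × V => G.Adj p.1 p.2)).card

lemma cn_iso {G : SimpleGraph V} {H : SimpleGraph W} [DecidableRel G.Adj]
    [DecidableRel H.Adj] (e : G ≃g H) (a b : V) : cn H (e a) (e b) = cn G a b := by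
  apply Finset.card_bij' (fun x _ => e.symm x) (fun x _ => e x)
  · intro x hx
    simp only [Finset.mem_filter, Finset.mem_univ, true_and] at hx ⊢
    exact ⟨by simpa using e.symm.map_adj_iff.mpr hx.1,
           by simpa using e.symm.map_adj_iff.mpr hx.2⟩
  · intro x hx
    simp only [Finset.mem_filter, Finset.mem_univ, true_and] at hx ⊢
    exact ⟨e.map_adj_iff.mpr hx.1, e.map_adj_iff.mpr hx.2⟩
  · intro x _; simp
  · intro x _; simp

lemma adjCount_iso {G : SimpleGraph V} {H : SimpleGraph W} [DecidableRel G.Adj]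
    [DecidableRel H.Adj] (e : G ≃g H) : adjCount G = adjCount H := by
  apply Finset.card_bij' (fun p _ => (e p.1, e p.2)) (fun p _ => (e.symm p.1, e.symm p.2))
  · intro p hp
    simp only [Finset.mem_filter, Finset.mem_univ, true_and] at hp ⊢
    exact e.map_adj_iff.mpr hp
  · intro p hp
    simp only [Finset.mem_filter, Finset.mem_univ, true_and] at hp ⊢
    simpa using e.symm.map_adj_iff.mpr hp
  · intro p _; simp
  · intro p _; simp

lemma sqSum_iso {G : SimpleGraph V} {H : SimpleGraph W} [DecidableRel G.Adj]
    [DecidableRel H.Adj] (e : G ≃g H) : sqSum G = sqSum H := by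
  apply Finset.sum_bij' (fun p _ => ((e p.1 : W), (e p.2 : W)))
    (fun p _ => ((e.symm p.1 : V), (e.symm p.2 : V)))
  · intro p hp
    simp only [Finset.mem_filter, Finset.mem_univ, true_and] at hp ⊢
    exact e.map_adj_iff.mpr hp
  · intro p hp
    simp only [Finset.mem_filter, Finset.mem_univ, true_and] at hp ⊢
    simpa using e.symm.map_adj_iff.mpr hp
  · intro p _; simp
  · intro p _; simp
  · intro p _
    rw [cn_iso e]

end Invariants

set_option maxHeartbeats 16000000 in
lemma sqSum_K2 : sqSum K2 = 272 := by decide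

set_option maxHeartbeats 16000000 in
lemma sqSum_K7 : sqSum K7 = 368 := by decide

set_option maxHeartbeats 16000000 in
lemma sqSum_K9 : sqSum K9 = 264 := by decide

set_option maxHeartbeats 1000000 in
lemma adjCount_K2 : adjCount K2 = 64 := by decide

set_option maxHeartbeats 1000000 in
lemma adjCount_K7 : adjCount K7 = 64 := by decide

set_option maxHeartbeats 1000000 in
lemma adjCount_K9 : adjCount K9 = 64 := by decide

set_option maxHeartbeats 1000000 in
lemma adjCount_K10 : adjCount K10 = 66 := by decide

/-- The graphs are pairwise non-isomorphic. -/
theorem pairwise_nonisomorphic_klein_E :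
    IsEmpty (K2 ≃g K7) ∧
    IsEmpty (K2 ≃g K9) ∧
    IsEmpty (K2 ≃g K10) ∧
    IsEmpty (K7 ≃g K9) ∧
    IsEmpty (K7 ≃g K10) ∧
    IsEmpty (K9 ≃g K10) := by
  refine ⟨⟨fun e => ?_⟩, ⟨fun e => ?_⟩, ⟨fun e => ?_⟩, ⟨fun e => ?_⟩, ⟨fun e => ?_⟩, ⟨fun e => ?_⟩⟩
  · have := sqSum_iso e; rw [sqSum_K2, sqSum_K7] at this; exact absurd this (by norm_num)
  · have := sqSum_iso e; rw [sqSum_K2, sqSum_K9] at this; exact absurd this (by norm_num)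
  · have := adjCount_iso e; rw [adjCount_K2, adjCount_K10] at this; exact absurd this (by norm_num)
  · have := sqSum_iso e; rw [sqSum_K7, sqSum_K9] at this; exact absurd this (by norm_num)
  · have := adjCount_iso e; rw [adjCount_K7, adjCount_K10] at this; exact absurd this (by norm_num)
  · have := adjCount_iso e; rw [adjCount_K9, adjCount_K10] at this; exact absurd this (by norm_num)
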